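/- For all integers k, m, n ≥ 0, Ш_{n+k,m} · Ш_{k,n}^{↑m} = Ш_{k,m+n} · Ш_{n,m} in the group algebra 𝕜B_∞. -/

import Mathlib

namespace BraidPaper

/-- Relations of the infinite Artin braid group `B_∞`.  The generator with index `n : ℕ`
represents the Artin generator `σ_{n+1}` (so generators are `σ_1, σ_2, …`). -/
def BraidRels : Set (FreeGroup ℕ) :=
  {r | (∃ i : ℕ, r = .of i * .of (i + 1) * .of i * (.of (i + 1) * .of i * .of (i + 1))⁻¹) ∨
       (∃ i j : ℕ, i + 2 ≤ j ∧ r = .of i * .of j * (.of j * .of i)⁻¹)}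

/-- The infinite Artin braid group `B_∞`, presented by generators `σ_1, σ_2, …` and the
braid and far-commutativity relations. -/
abbrev BInf : Type := PresentedGroup BraidRels

/-- The Artin generator `σ i` of `B_∞` (meaningful for `i ≥ 1`). -/
def σ (i : ℕ) : BInf := PresentedGroup.of (i - 1)

lemma rel_eq_one {r : FreeGroup ℕ} (hr : r ∈ BraidRels) : PresentedGroup.mk BraidRels r = 1 := by
  have : r ∈ Subgroup.normalClosure BraidRels := Subgroup.subset_normalClosure hr
  exact (QuotientGroup.eq_one_iff r).mpr this

lemma gen_braid (i : ℕ) :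
    (PresentedGroup.of i : BInf) * .of (i + 1) * .of i = .of (i + 1) * .of i * .of (i + 1) := by
  have h := rel_eq_one (Or.inl ⟨i, rfl⟩)
  rw [map_mul, map_mul, map_mul, map_inv, map_mul, map_mul, mul_inv_eq_one] at h
  exact h

lemma gen_comm {i j : ℕ} (hij : i + 2 ≤ j) :
    (PresentedGroup.of i : BInf) * .of j = .of j * .of i := by
  have h := rel_eq_one (Or.inr ⟨i, j, hij, rfl⟩)
  rw [map_mul, map_mul, map_inv, map_mul, mul_inv_eq_one] at h
  exact h

/-- The shift endomorphism `↑ℓ : B_∞ → B_∞`, `σ_i ↦ σ_{i+ℓ}`. -/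
def shift (l : ℕ) : BInf →* BInf :=
  PresentedGroup.toGroup (f := fun n => (PresentedGroup.of (n + l) : BInf)) (by
    rintro r (⟨i, rfl⟩ | ⟨i, j, hij, rfl⟩) <;>
      simp only [map_mul, map_inv, FreeGroup.lift_apply_of, mul_inv_eq_one]
    · have h1 : i + 1 + l = i + l + 1 := by omega
      rw [h1]; exact gen_braid (i + l)
    · exact gen_comm (by omega : (i + l) + 2 ≤ j + l))

/-- The ascending product `σ_i σ_{i+1} ⋯ σ_{i+l-1}` (of `l` factors). -/
def asc (i l : ℕ) : BInf := ((List.range l).map fun t => σ (i + t)).prod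

/-- The descending product `σ_i σ_{i-1} ⋯ σ_{i-k+1}` (of `k` factors). -/
def desc (i k : ℕ) : BInf := ((List.range k).map fun t => σ (i - t)).prod

/-- The block transposition braid
`β_{k,l} = (σ_k σ_{k+1} ⋯ σ_{k+l-1})(σ_{k-1} σ_k ⋯ σ_{k+l-2}) ⋯ (σ_1 σ_2 ⋯ σ_l)`,
with `β_{k,0} = β_{0,l} = 1`. -/
def β (k l : ℕ) : BInf := ((List.range k).map fun r => asc (k - r) l).prod

/-- The positive (Garside) lift `ω_a = β_{1,1} β_{2,1} ⋯ β_{a-1,1}` of the longest element of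
the symmetric group `S_a`, with `ω_0 = ω_1 = 1`. -/
def ω (a : ℕ) : BInf := ((List.range (a - 1)).map fun t => β (t + 1) 1).prod

/-- The copy of the braid group `B_n` inside `B_∞`: the subgroup generated by
`σ_1, …, σ_{n-1}`. -/
def BSub (n : ℕ) : Subgroup BInf := Subgroup.closure {g | ∃ i, 1 ≤ i ∧ i < n ∧ g = σ i}


variable (𝕜 : Type) [CommRing 𝕜]

/-- The canonical embedding of `B_∞` into its group algebra `𝕜B_∞`. -/
noncomputable def ι (g : BInf) : MonoidAlgebra 𝕜 BInf := MonoidAlgebra.of 𝕜 BInf g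

/-- The shift `↑ℓ` extended (as an algebra homomorphism) to the group algebra `𝕜B_∞`. -/
noncomputable def shiftA (l : ℕ) : MonoidAlgebra 𝕜 BInf →ₐ[𝕜] MonoidAlgebra 𝕜 BInf :=
  MonoidAlgebra.mapDomainAlgHom 𝕜 𝕜 (shift l)

/-- The braid shuffle elements `Ш_{m,n} ∈ 𝕜B_∞` (for natural `m, n`), determined by
`Ш_{0,n} = Ш_{m,0} = 1` and the Pascal-type recursion
`Ш_{m,n} = Ш_{m-1,n} + Ш_{m,n-1} β_{m,1}^{↑(n-1)}`. -/
noncomputable def Sh : ℕ → ℕ → MonoidAlgebra 𝕜 BInf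
  | 0, _ => 1
  | _ + 1, 0 => 1
  | m + 1, n + 1 => Sh m (n + 1) + Sh (m + 1) n * ι 𝕜 (shift n (β (m + 1) 1))
  termination_by m n => (m, n)

/-- The braid shuffle elements `Ш_{m,n} ∈ 𝕜B_∞` for integer indices: `Ш_{m,n} = 0` whenever
`m < 0` or `n < 0`. -/
noncomputable def ShZ (m n : ℤ) : MonoidAlgebra 𝕜 BInf :=
  if 0 ≤ m ∧ 0 ≤ n then Sh 𝕜 m.toNat n.toNat else 0

/-- The braid Pochhammer symbol
`P_{k,n}(x,y) = (x - β_{k,1} y)(x - β_{k+1,1} y) ⋯ (x - β_{k+n-1,1} y) ∈ 𝕜B_∞`. -/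
noncomputable def Poch (k n : ℕ) (x y : 𝕜) : MonoidAlgebra 𝕜 BInf :=
  ((List.range n).map fun t =>
    algebraMap 𝕜 (MonoidAlgebra 𝕜 BInf) x - algebraMap 𝕜 (MonoidAlgebra 𝕜 BInf) y * ι 𝕜 (β (k + t) 1)).prod

/-! Induct lexicographically on `(k, m, n)`. Expanding both sides by the Pascal recursion
produces three smaller instances of the identity plus cross terms involving the descending runs
`β_{a,1}^{↑b} = σ_{a+b} ⋯ σ_{b+1}`. The cross terms match because `Ш_{p,q}` lies in the copy of
`B_{p+q}` generated by `σ_1, …, σ_{p+q-1}`: a run `β_{a,1}^{↑b}` with `a ≥ p + q` conjugates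
`Ш_{p,q}^{↑(b+1)}` into `Ш_{p,q}^{↑b}`, and a run starting above `σ_{p+q}` commutes with
`Ш_{p,q}`. -/

lemma σ_succ (i : ℕ) : σ (i + 1) = PresentedGroup.of i := by simp [σ]

lemma σ_braid (i : ℕ) :
    σ (i + 1) * σ (i + 2) * σ (i + 1) = σ (i + 2) * σ (i + 1) * σ (i + 2) := by
  rw [σ_succ, σ_succ]
  exact gen_braid i

lemma σ_commute {i j : ℕ} (h : i + 2 ≤ j) : Commute (σ (i + 1)) (σ (j + 1)) := by
  rw [σ_succ, σ_succ]
  exact gen_comm h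

lemma shift_of (l i : ℕ) : shift l (PresentedGroup.of i) = PresentedGroup.of (i + l) :=
  PresentedGroup.toGroup.of _

lemma shift_σ (l i : ℕ) : shift l (σ (i + 1)) = σ (i + 1 + l) := by
  rw [σ_succ, shift_of, show i + 1 + l = i + l + 1 by omega, σ_succ]

lemma shift_zero : shift 0 = MonoidHom.id BInf :=
  PresentedGroup.ext fun i => shift_of 0 i

def descRun (b : ℕ) : ℕ → BInf
  | 0 => 1
  | a + 1 => σ (b + a) * descRun b a

@[simp] lemma descRun_zero (b : ℕ) : descRun b 0 = 1 := rfl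

lemma descRun_succ (b a : ℕ) : descRun b (a + 1) = σ (b + a) * descRun b a := rfl

lemma descRun_add (b a c : ℕ) : descRun b (a + c) = descRun (b + c) a * descRun b c := by
  induction a with
  | zero => simp
  | succ a ih =>
    rw [Nat.add_right_comm, descRun_succ, ih, descRun_succ, add_assoc, add_comm c, mul_assoc]

lemma shift_descRun (l b a : ℕ) : shift l (descRun (b + 1) a) = descRun (b + 1 + l) a := by
  induction a with
  | zero => simp
  | succ a ih =>
    rw [descRun_succ, map_mul, ih, descRun_succ, show b + 1 + a = b + a + 1 by omega, shift_σ]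
    congr 2
    omega

lemma β_one (k : ℕ) : β k 1 = descRun 1 k := by
  have hasc : ∀ i, asc i 1 = σ i := fun i => by simp [asc]
  induction k with
  | zero => rfl
  | succ k ih =>
    rw [β, List.range_succ_eq_map, List.map_cons, List.prod_cons, List.map_map, hasc, descRun_succ,
      ← ih, β]
    congr 2
    · omega
    · congr 1
      funext r
      simp

lemma shift_β_one (l a : ℕ) : shift l (β a 1) = descRun (l + 1) a := by
  simpa [β_one, add_comm] using shift_descRun l 0 a

lemma descRun_commute_σ_of_lt {b i : ℕ} (hi : 1 ≤ i) (hib : i + 1 < b) (a : ℕ) :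
    Commute (descRun b a) (σ i) := by
  induction a with
  | zero => exact Commute.one_left _
  | succ a ih =>
    obtain ⟨i, rfl⟩ : ∃ i', i = i' + 1 := ⟨i - 1, by omega⟩
    obtain ⟨j, hj⟩ : ∃ j, b + a = j + 1 := ⟨b + a - 1, by omega⟩
    rw [descRun_succ, hj]
    exact ((σ_commute (by omega)).symm).mul_left ih

lemma descRun_commute_σ_of_gt {b a i : ℕ} (hb : 1 ≤ b) (hi : b + a < i) :
    Commute (descRun b a) (σ i) := by
  induction a with
  | zero => exact Commute.one_left _
  | succ a ih =>
    obtain ⟨i, rfl⟩ : ∃ i', i = i' + 1 := ⟨i - 1, by omega⟩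
    obtain ⟨j, hj⟩ : ∃ j, b + a = j + 1 := ⟨b + a - 1, by omega⟩
    rw [descRun_succ, hj]
    exact (σ_commute (by omega)).mul_left (ih (by omega))

lemma descRun_mul_σ (b a i : ℕ) (hi : 1 ≤ i) (hia : i < a) :
    descRun (b + 1) a * σ (i + (b + 1)) = σ (i + b) * descRun (b + 1) a := by
  rw [add_comm i, add_comm i]
  induction a with
  | zero => omega
  | succ a ih =>
    rcases Nat.lt_or_ge i a with hlt | hge
    · have hc : Commute (σ (b + 1 + a)) (σ (b + i)) := by
        obtain ⟨i', rfl⟩ : ∃ i', i = i' + 1 := ⟨i - 1, by omega⟩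
        rw [show b + 1 + a = b + a + 1 by omega, ← add_assoc]
        exact (σ_commute (by omega)).symm
      rw [descRun_succ, mul_assoc, ih hlt, ← mul_assoc, hc.eq, mul_assoc]
    · obtain rfl : i = a := by omega
      obtain ⟨c, rfl⟩ : ∃ c, i = c + 1 := ⟨i - 1, by omega⟩
      have hc : Commute (descRun (b + 1) c) (σ (b + c + 2)) :=
        descRun_commute_σ_of_gt (by omega) (by omega)
      have hbr := σ_braid (b + c)
      rw [show b + c + 1 + 1 = b + c + 2 by omega] at hbr
      simp only [descRun_succ, show b + 1 + (c + 1) = b + c + 2 by omega,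
        show b + (c + 1) = b + c + 1 by omega, show b + 1 + c = b + c + 1 by omega]
      calc σ (b + c + 2) * (σ (b + c + 1) * descRun (b + 1) c) * σ (b + c + 2)
          = σ (b + c + 2) * σ (b + c + 1) * σ (b + c + 2) * descRun (b + 1) c := by
            simp only [mul_assoc, hc.eq]
        _ = σ (b + c + 1) * (σ (b + c + 2) * (σ (b + c + 1) * descRun (b + 1) c)) := by
            rw [← hbr]; group

lemma mul_descRun_of_mul_σ {g : BInf} {l l' N : ℕ}
    (H : ∀ i, 1 ≤ i → i ≤ N → g * σ (i + l) = σ (i + l') * g) {a c : ℕ} (hc : 1 ≤ c)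
    (hca : c + a ≤ N + 1) : g * descRun (c + l) a = descRun (c + l') a * g := by
  induction a with
  | zero => simp
  | succ a ih =>
    rw [descRun_succ, descRun_succ, Nat.add_right_comm, Nat.add_right_comm c l', ← mul_assoc,
      H _ (by omega) (by omega), mul_assoc, ih (by omega), mul_assoc]

lemma descRun_mul_descRun_of_le {b c j a : ℕ} (hc : 1 ≤ c) (h : c + j ≤ a) :
    descRun (b + 1) a * descRun (c + (b + 1)) j = descRun (c + b) j * descRun (b + 1) a :=
  mul_descRun_of_mul_σ (N := a - 1) (fun i h1 h2 => descRun_mul_σ b a i h1 (by omega)) hc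
    (by omega)

lemma ι_mul (g h : BInf) : ι 𝕜 (g * h) = ι 𝕜 g * ι 𝕜 h :=
  map_mul (MonoidAlgebra.of 𝕜 BInf) g h

lemma shiftA_ι (l : ℕ) (g : BInf) : shiftA 𝕜 l (ι 𝕜 g) = ι 𝕜 (shift l g) := by
  simp [shiftA, ι]

lemma shiftA_zero : shiftA 𝕜 0 = AlgHom.id 𝕜 _ := by
  rw [shiftA, shift_zero, MonoidAlgebra.mapDomainAlgHom_id]

@[simp] lemma Sh_zero_left (b : ℕ) : Sh 𝕜 0 b = 1 := by rw [Sh]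

@[simp] lemma Sh_zero_right (a : ℕ) : Sh 𝕜 a 0 = 1 := by cases a <;> rw [Sh]

lemma shiftA_Sh_succ_succ (l a b : ℕ) :
    shiftA 𝕜 l (Sh 𝕜 (a + 1) (b + 1)) = shiftA 𝕜 l (Sh 𝕜 a (b + 1)) +
      shiftA 𝕜 l (Sh 𝕜 (a + 1) b) * ι 𝕜 (descRun (b + 1 + l) (a + 1)) := by
  rw [Sh, map_add, map_mul, shiftA_ι, shift_β_one, shift_descRun]

lemma Sh_succ_succ (a b : ℕ) :
    Sh 𝕜 (a + 1) (b + 1) =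
      Sh 𝕜 a (b + 1) + Sh 𝕜 (a + 1) b * ι 𝕜 (descRun (b + 1) (a + 1)) := by
  simpa [shiftA_zero] using shiftA_Sh_succ_succ 𝕜 0 a b

lemma mul_shiftA_Sh_of_mul_σ {g : BInf} {l l' N : ℕ}
    (H : ∀ i, 1 ≤ i → i ≤ N → g * σ (i + l) = σ (i + l') * g) {a b : ℕ}
    (hab : a + b ≤ N + 1) :
    ι 𝕜 g * shiftA 𝕜 l (Sh 𝕜 a b) = shiftA 𝕜 l' (Sh 𝕜 a b) * ι 𝕜 g := by
  induction a generalizing b with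
  | zero => simp
  | succ a iha =>
    induction b with
    | zero => simp
    | succ b ihb =>
      have hrun : g * descRun (b + 1 + l) (a + 1) = descRun (b + 1 + l') (a + 1) * g :=
        mul_descRun_of_mul_σ H (by omega) (by omega)
      rw [shiftA_Sh_succ_succ, shiftA_Sh_succ_succ, mul_add, add_mul, iha (by omega), ← mul_assoc,
        ihb (by omega), mul_assoc, ← ι_mul, hrun, ι_mul, mul_assoc]

lemma commute_ι_Sh_of_commute_σ {g : BInf} {N : ℕ}
    (H : ∀ i, 1 ≤ i → i ≤ N → Commute g (σ i)) {a b : ℕ} (hab : a + b ≤ N + 1) :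
    Commute (ι 𝕜 g) (Sh 𝕜 a b) := by
  simpa [Commute, SemiconjBy, shiftA_zero] using
    mul_shiftA_Sh_of_mul_σ 𝕜 (l := 0) (l' := 0) (fun i h1 h2 => (H i h1 h2).eq) hab

lemma ι_descRun_mul_shiftA_Sh {a p q : ℕ} (b : ℕ) (h : p + q ≤ a) :
    ι 𝕜 (descRun (b + 1) a) * shiftA 𝕜 (b + 1) (Sh 𝕜 p q) =
      shiftA 𝕜 b (Sh 𝕜 p q) * ι 𝕜 (descRun (b + 1) a) :=
  mul_shiftA_Sh_of_mul_σ 𝕜 (N := a - 1) (fun i h1 h2 => descRun_mul_σ b a i h1 (by omega))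
    (by omega)

lemma commute_ι_descRun_Sh {b p q : ℕ} (a : ℕ) (h : p + q < b) :
    Commute (ι 𝕜 (descRun b a)) (Sh 𝕜 p q) :=
  commute_ι_Sh_of_commute_σ 𝕜 (N := b - 2)
    (fun i h1 h2 => descRun_commute_σ_of_lt h1 (by omega) a) (by omega)

def ShuffleIdentity (k m n : ℕ) : Prop :=
  Sh 𝕜 (n + k) m * shiftA 𝕜 m (Sh 𝕜 k n) = Sh 𝕜 k (m + n) * Sh 𝕜 n m

theorem ShuffleIdentity.succ {k m n : ℕ} (h₁ : ShuffleIdentity 𝕜 k (m + 1) (n + 1))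
    (h₂ : ShuffleIdentity 𝕜 (k + 1) (m + 1) n)
    (h₃ : ShuffleIdentity 𝕜 (k + 1) m (n + 1)) :
    ShuffleIdentity 𝕜 (k + 1) (m + 1) (n + 1) := by
  unfold ShuffleIdentity at *
  rw [show n + 1 + (k + 1) = n + k + 1 + 1 by omega, show m + 1 + (n + 1) = m + n + 1 + 1 by omega,
    Sh_succ_succ, shiftA_Sh_succ_succ, Sh_succ_succ 𝕜 k]
  rw [show n + 1 + k = n + k + 1 by omega, show m + 1 + (n + 1) = m + n + 1 + 1 by omega] at h₁
  rw [show n + (k + 1) = n + k + 1 by omega, show m + 1 + n = m + n + 1 by omega] at h₂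
  rw [show n + 1 + (k + 1) = n + k + 1 + 1 by omega, show m + (n + 1) = m + n + 1 by omega,
    shiftA_Sh_succ_succ] at h₃
  simp only [show n + k + 1 + 1 = n + k + 2 by omega, show m + n + 1 + 1 = m + n + 2 by omega,
    show n + 1 + (m + 1) = m + n + 2 by omega, show n + 1 + m = m + n + 1 by omega] at *
  set d₁ := ι 𝕜 (descRun (m + 1) (n + k + 2))
  set d₂ := ι 𝕜 (descRun (m + n + 2) (k + 1))
  set d₃ := ι 𝕜 (descRun (m + n + 1) (k + 1))
  set B := Sh 𝕜 (n + k + 2) m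
  set C := shiftA 𝕜 (m + 1) (Sh 𝕜 k (n + 1))
  set D := shiftA 𝕜 (m + 1) (Sh 𝕜 (k + 1) n)
  set C' := shiftA 𝕜 m (Sh 𝕜 k (n + 1))
  set D' := shiftA 𝕜 m (Sh 𝕜 (k + 1) n)
  set Q := Sh 𝕜 (k + 1) (m + n + 1)
  set U := Sh 𝕜 (n + 1) m
  have hd₁d₂ : d₁ * d₂ = d₃ * d₁ := by
    rw [← ι_mul, ← ι_mul, show m + n + 2 = n + 1 + (m + 1) by omega,
      descRun_mul_descRun_of_le (by omega) (by omega), show n + 1 + m = m + n + 1 by omega]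
  have hB : B * d₁ * (C + D * d₂) = Q * U * d₁ := by
    calc B * d₁ * (C + D * d₂) = B * (d₁ * C) + B * (d₁ * D * d₂) := by noncomm_ring
      _ = B * (C' + D' * d₃) * d₁ := by
        rw [ι_descRun_mul_shiftA_Sh 𝕜 m (by omega), ι_descRun_mul_shiftA_Sh 𝕜 m (by omega),
          mul_assoc D', hd₁d₂]
        noncomm_ring
      _ = Q * U * d₁ := by rw [h₃]
  have hd₂d₄ : d₂ * ι 𝕜 (descRun (m + 1) (n + 1)) = d₁ := by
    rw [← ι_mul, show m + n + 2 = m + 1 + (n + 1) by omega, ← descRun_add,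
      show k + 1 + (n + 1) = n + k + 2 by omega]
  have hd₂S : d₂ * Sh 𝕜 (n + 1) (m + 1) = Sh 𝕜 n (m + 1) * d₂ + U * d₁ := by
    rw [Sh_succ_succ, mul_add, (commute_ι_descRun_Sh 𝕜 _ (by omega)).eq, ← mul_assoc,
      (commute_ι_descRun_Sh 𝕜 _ (by omega)).eq, mul_assoc, hd₂d₄]
  calc _ = Sh 𝕜 (n + k + 1) (m + 1) * C + Sh 𝕜 (n + k + 1) (m + 1) * D * d₂ +
        B * d₁ * (C + D * d₂) := by noncomm_ring
    _ = _ := by rw [h₁, h₂, hB, add_mul, mul_assoc Q d₂, hd₂S]; noncomm_ring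

/-- `Ш_{n+k,m} · Ш_{k,n}^{↑m} = Ш_{k,m+n} · Ш_{n,m}` in `𝕜B_∞`. -/
theorem shuffle_identity (k m n : ℕ) :
    Sh 𝕜 (n + k) m * shiftA 𝕜 m (Sh 𝕜 k n) = Sh 𝕜 k (m + n) * Sh 𝕜 n m := by
  show ShuffleIdentity 𝕜 k m n
  induction k generalizing m n with
  | zero => simp [ShuffleIdentity]
  | succ k ihk =>
    induction m generalizing n with
    | zero => simp [ShuffleIdentity, shiftA_zero]
    | succ m ihm =>
      induction n with
      | zero => simp [ShuffleIdentity]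
      | succ n ihn => exact .succ 𝕜 (ihk _ _) ihn (ihm _)

end BraidPaper
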